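/- arXiv:math/0411031 — 2 statements merged into one kernel-verified Lean document; each statement's English description precedes it below -/
import Mathlib

section
/- Let A be an (n+1)×(n+1) integer matrix whose characteristic polynomial is irreducible over ℚ. Then the set Ξ(A) of all integer matrices commuting with A forms an additive group isomorphic to ℤ^{n+1}. -/
open Polynomial Module

variable {n : ℕ}

/-- mulVec by a fixed vector, as a linear map in the matrix. -/
def evL (v : Fin (n+1) → ℚ) : Matrix (Fin (n+1)) (Fin (n+1)) ℚ →ₗ[ℚ] (Fin (n+1) → ℚ) where
  toFun M := M.mulVec v
  map_add' M N := Matrix.add_mulVec M N v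
  map_smul' c M := Matrix.smul_mulVec c M v

variable (Aq : Matrix (Fin (n+1)) (Fin (n+1)) ℚ)

lemma charpoly_dvd_of_kills (hirr : Irreducible Aq.charpoly) (p : ℚ[X])
    (hp : (aeval Aq p).mulVec (Pi.single 0 1) = 0) : Aq.charpoly ∣ p := by
  set v : Fin (n+1) → ℚ := Pi.single 0 1 with hv
  let I : Ideal ℚ[X] :=
  { carrier := {q | (aeval Aq q).mulVec v = 0}
    zero_mem' := by simp [Matrix.zero_mulVec]
    add_mem' := by
      intro a b ha hb
      simp only [Set.mem_setOf_eq, map_add, Matrix.add_mulVec] at *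
      rw [ha, hb, add_zero]
    smul_mem' := by
      intro c q hq
      simp only [Set.mem_setOf_eq, smul_eq_mul, map_mul] at *
      rw [← Matrix.mulVec_mulVec, hq, Matrix.mulVec_zero] }
  have hCI : Ideal.span {Aq.charpoly} ≤ I := by
    rw [Ideal.span_le, Set.singleton_subset_iff]
    show (aeval Aq Aq.charpoly).mulVec v = 0
    rw [Matrix.aeval_self_charpoly, Matrix.zero_mulVec]
  have hne : I ≠ ⊤ := by
    intro h
    have h1 : (1 : ℚ[X]) ∈ I := h ▸ Submodule.mem_top
    have : (aeval Aq (1:ℚ[X])).mulVec v = 0 := h1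
    rw [map_one, Matrix.one_mulVec] at this
    have := congrFun this 0
    simp [hv] at this
  have hmax := PrincipalIdealRing.isMaximal_of_irreducible hirr
  have heq : Ideal.span {Aq.charpoly} = I := hmax.eq_of_le hne hCI
  rw [← Ideal.mem_span_singleton, heq]
  exact hp

lemma kills_coeffs (hirr : Irreducible Aq.charpoly) (s : Finset (Fin (n+1)))
    (g : Fin (n+1) → ℚ)
    (h : ∑ i ∈ s, g i • ((Aq ^ (i:ℕ)).mulVec (Pi.single 0 1)) = 0) :
    ∀ i ∈ s, g i = 0 := by
  set p : ℚ[X] := ∑ i ∈ s, C (g i) * X ^ (i:ℕ) with hp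
  have hev : (aeval Aq p).mulVec (Pi.single 0 1) = 0 := by
    have : (aeval Aq p).mulVec (Pi.single 0 1) = evL (Pi.single 0 1) (aeval Aq p) := rfl
    rw [this, hp, map_sum, map_sum, ← h]
    refine Finset.sum_congr rfl fun i _ => ?_
    rw [map_mul, aeval_C, map_pow, aeval_X, ← Algebra.smul_def, map_smul]
    rfl
  have hdvd := charpoly_dvd_of_kills Aq hirr p hev
  have hdeg : Aq.charpoly.natDegree = n + 1 := by
    rw [Matrix.charpoly_natDegree_eq_dim, Fintype.card_fin]
  have hp0 : p = 0 := by
    by_contra hne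
    have := Polynomial.natDegree_le_of_dvd hdvd hne
    have hle : p.natDegree ≤ n := by
      apply Polynomial.natDegree_sum_le_of_forall_le
      intro i _
      calc (C (g i) * X ^ (i:ℕ)).natDegree ≤ (i:ℕ) := by
            apply le_trans (natDegree_mul_le)
            simp
        _ ≤ n := Nat.lt_succ_iff.mp i.isLt
    omega
  intro i hi
  have := congrArg (fun q => Polynomial.coeff q (i:ℕ)) hp0
  simp only [hp, Polynomial.finset_sum_coeff, coeff_C_mul, coeff_X_pow,
    Polynomial.coeff_zero] at this
  rw [Finset.sum_eq_single i] at this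
  · simpa using this
  · intro j _ hji
    have hne : ¬ ((i:ℕ) = (j:ℕ)) := fun h => hji (Fin.ext h.symm)
    simp [hne]
  · intro h; exact absurd hi h

/-- The commutant of Aq over ℚ. -/
def commS : Submodule ℚ (Matrix (Fin (n+1)) (Fin (n+1)) ℚ) where
  carrier := {B | Aq * B = B * Aq}
  zero_mem' := by simp
  add_mem' := by
    intro B C hB hC
    simp only [Set.mem_setOf_eq, mul_add, add_mul] at *
    rw [hB, hC]
  smul_mem' := by
    intro c B hB
    simp only [Set.mem_setOf_eq, Matrix.mul_smul, Matrix.smul_mul] at *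
    rw [hB]

lemma finrank_commS_le (hirr : Irreducible Aq.charpoly) :
    finrank ℚ (commS Aq) ≤ n + 1 := by
  classical
  set v : Fin (n+1) → ℚ := Pi.single 0 1 with hv
  -- the vectors Aq^i v are linearly independent, hence a basis
  have hw : LinearIndependent ℚ (fun i : Fin (n+1) => (Aq ^ (i:ℕ)).mulVec v) := by
    rw [linearIndependent_iff']
    exact fun s g h => kills_coeffs Aq hirr s g h
  have hcard : Fintype.card (Fin (n+1)) = finrank ℚ (Fin (n+1) → ℚ) := by
    simp [Module.finrank_fintype_fun_eq_card]
  let bV : Basis (Fin (n+1)) ℚ (Fin (n+1) → ℚ) :=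
    basisOfLinearIndependentOfCardEqFinrank hw hcard
  have hbV : ∀ i, bV i = (Aq ^ (i:ℕ)).mulVec v :=
    fun i => congrFun (coe_basisOfLinearIndependentOfCardEqFinrank hw hcard) i
  -- evaluation map on the commutant
  let ev : commS Aq →ₗ[ℚ] (Fin (n+1) → ℚ) := (evL v).comp (commS Aq).subtype
  have hinj : Function.Injective ev := by
    rw [← LinearMap.ker_eq_bot, LinearMap.ker_eq_bot']
    intro B hB
    have hBv : (B : Matrix (Fin (n+1)) (Fin (n+1)) ℚ).mulVec v = 0 := hB
    have hcomm : ∀ i : ℕ, (B : Matrix (Fin (n+1)) (Fin (n+1)) ℚ) * Aq ^ i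
        = Aq ^ i * (B : Matrix (Fin (n+1)) (Fin (n+1)) ℚ) := by
      intro i
      have : Commute (B : Matrix (Fin (n+1)) (Fin (n+1)) ℚ) Aq := B.2.symm
      exact (this.pow_right i).eq
    have hB0 : (B : Matrix (Fin (n+1)) (Fin (n+1)) ℚ) = 0 := by
      have hlin : Matrix.toLin' (B : Matrix (Fin (n+1)) (Fin (n+1)) ℚ) = 0 := by
        apply bV.ext
        intro i
        rw [hbV i, Matrix.toLin'_apply, Matrix.mulVec_mulVec, hcomm i,
          ← Matrix.mulVec_mulVec, hBv, Matrix.mulVec_zero]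
        rfl
      have := Matrix.toLin'.injective (by rw [hlin]; simp : Matrix.toLin' (B : Matrix (Fin (n+1)) (Fin (n+1)) ℚ) = Matrix.toLin' 0)
      exact this
    exact Subtype.ext hB0
  calc finrank ℚ (commS Aq) ≤ finrank ℚ (Fin (n+1) → ℚ) :=
        LinearMap.finrank_le_finrank_of_injective hinj
    _ = n + 1 := by simp [Module.finrank_fintype_fun_eq_card]

/-- The set Ξ(A) of integer matrices commuting with A, as an additive group. -/
def Xi {n : ℕ} (A : Matrix (Fin (n+1)) (Fin (n+1)) ℤ) :
    AddSubgroup (Matrix (Fin (n+1)) (Fin (n+1)) ℤ) where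
  carrier := {B | A * B = B * A}
  add_mem' := by
    intro B C hB hC
    simp only [Set.mem_setOf_eq] at *
    rw [Matrix.mul_add, Matrix.add_mul, hB, hC]
  zero_mem' := by simp
  neg_mem' := by
    intro B hB
    simp only [Set.mem_setOf_eq] at *
    rw [Matrix.mul_neg, Matrix.neg_mul, hB]

/-- Entrywise cast ℤ → ℚ on matrices as a ℤ-linear map. -/
def castM : Matrix (Fin (n+1)) (Fin (n+1)) ℤ →ₗ[ℤ] Matrix (Fin (n+1)) (Fin (n+1)) ℚ :=
  ((Int.castRingHom ℚ).mapMatrix :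
    Matrix (Fin (n+1)) (Fin (n+1)) ℤ →+* Matrix (Fin (n+1)) (Fin (n+1)) ℚ).toAddMonoidHom.toIntLinearMap

lemma castM_inj : Function.Injective (castM (n := n)) := by
  intro M N h
  ext i j
  have := congrFun (congrFun (congrArg (fun X => (X : Matrix (Fin (n+1)) (Fin (n+1)) ℚ)) h) i) j
  simp only [castM, AddMonoidHom.toIntLinearMap, RingHom.toAddMonoidHom_eq_coe] at this
  have h2 : ((M i j : ℤ) : ℚ) = ((N i j : ℤ) : ℚ) := this
  exact_mod_cast h2

theorem stmt0 (n : ℕ) (A : Matrix (Fin (n+1)) (Fin (n+1)) ℤ)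
    (hirr : Irreducible ((A.map (Int.cast : ℤ → ℚ)).charpoly)) :
    Nonempty (Xi A ≃+ (Fin (n+1) → ℤ)) := by
  classical
  set Aq : Matrix (Fin (n+1)) (Fin (n+1)) ℚ := A.map (Int.cast : ℤ → ℚ) with hAq
  have hcast : castM A = Aq := rfl
  set L : Submodule ℤ (Matrix (Fin (n+1)) (Fin (n+1)) ℤ) := AddSubgroup.toIntSubmodule (Xi A) with hL
  have hmemL : ∀ B, B ∈ L ↔ A * B = B * A := fun B => Iff.rfl
  -- castM is multiplicative
  have hmul : ∀ M N : Matrix (Fin (n+1)) (Fin (n+1)) ℤ, castM (M * N) = castM M * castM N :=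
    fun M N => map_mul ((Int.castRingHom ℚ).mapMatrix) M N
  have hpow : ∀ (M : Matrix (Fin (n+1)) (Fin (n+1)) ℤ) (k : ℕ), castM (M ^ k) = (castM M) ^ k :=
    fun M k => map_pow ((Int.castRingHom ℚ).mapMatrix) M k
  -- lower bound: powers of A in L are ℤ-independent
  have hQpow : LinearIndependent ℚ (fun i : Fin (n+1) => Aq ^ (i:ℕ)) := by
    rw [linearIndependent_iff']
    intro s g h
    apply kills_coeffs Aq hirr s g
    have := congrArg (evL (Pi.single 0 1)) h
    rw [map_sum, map_zero] at this
    simpa [evL] using this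
  have hZpow : LinearIndependent ℤ (fun i : Fin (n+1) => A ^ (i:ℕ)) := by
    apply LinearIndependent.of_comp castM
    have : (castM ∘ fun i : Fin (n+1) => A ^ (i:ℕ)) = fun i : Fin (n+1) => Aq ^ (i:ℕ) := by
      funext i; simp [Function.comp, hpow, hcast]
    rw [this]
    exact (LinearIndependent.iff_fractionRing ℤ ℚ).mpr hQpow
  have hgL : ∀ i : Fin (n+1), (A ^ (i:ℕ)) ∈ L := by
    intro i
    exact ((Commute.refl A).pow_right (i:ℕ)).eq
  have hZpowL : LinearIndependent ℤ (fun i : Fin (n+1) => (⟨A ^ (i:ℕ), hgL i⟩ : L)) := by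
    apply LinearIndependent.of_comp L.subtype
    exact hZpow
  have hlow : n + 1 ≤ finrank ℤ L := by
    have := hZpowL.fintype_card_le_finrank
    simpa using this
  -- upper bound
  let ι := Module.Free.ChooseBasisIndex ℤ L
  let b : Basis ι ℤ L := Module.Free.chooseBasis ℤ L
  have hmemS : ∀ i : ι, castM ((b i : Matrix (Fin (n+1)) (Fin (n+1)) ℤ)) ∈ commS Aq := by
    intro i
    have hbi : A * (b i : Matrix (Fin (n+1)) (Fin (n+1)) ℤ)
        = (b i : Matrix (Fin (n+1)) (Fin (n+1)) ℤ) * A := (b i).2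
    show Aq * castM _ = castM _ * Aq
    rw [← hcast, ← hmul, ← hmul, hbi]
  have hu : LinearIndependent ℤ (fun i : ι => castM ((b i : Matrix (Fin (n+1)) (Fin (n+1)) ℤ))) := by
    have h1 : LinearIndependent ℤ (⇑L.subtype ∘ ⇑b) :=
      b.linearIndependent.map' L.subtype L.ker_subtype
    have h2 := h1.map' castM (LinearMap.ker_eq_bot.mpr castM_inj)
    exact h2
  have huQ : LinearIndependent ℚ (fun i : ι => castM ((b i : Matrix (Fin (n+1)) (Fin (n+1)) ℤ))) :=
    (LinearIndependent.iff_fractionRing ℤ ℚ).mp hu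
  have huS : LinearIndependent ℚ (fun i : ι => (⟨castM ((b i : Matrix (Fin (n+1)) (Fin (n+1)) ℤ)), hmemS i⟩ : commS Aq)) := by
    apply LinearIndependent.of_comp (commS Aq).subtype
    exact huQ
  have hup : finrank ℤ L ≤ n + 1 := by
    rw [Module.finrank_eq_card_chooseBasisIndex ℤ L]
    calc Fintype.card ι ≤ finrank ℚ (commS Aq) := huS.fintype_card_le_finrank
      _ ≤ n + 1 := finrank_commS_le Aq hirr
  have hfin : finrank ℤ L = n + 1 := le_antisymm hup hlow
  have hcard : Fintype.card ι = n + 1 := by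
    rw [← Module.finrank_eq_card_chooseBasisIndex ℤ L, hfin]
  let e : ι ≃ Fin (n+1) := Fintype.equivFinOfCardEq hcard
  let lequiv : L ≃ₗ[ℤ] (Fin (n+1) → ℤ) := (b.reindex e).equivFun
  let eq1 : Xi A ≃+ L :=
  { toFun := fun x => ⟨x.1, x.2⟩
    invFun := fun x => ⟨x.1, x.2⟩
    left_inv := fun x => rfl
    right_inv := fun x => rfl
    map_add' := fun x y => rfl }
  exact ⟨eq1.trans lequiv.toAddEquiv⟩
end

section
/- For integers a, b ≥ 0, let m = b−a−1, n = (a+2)(b+1), A_{m,n} = [[0,1,0],[0,0,1],[1,−m,−n]], and Y = A_{m,n}^{−1}(A_{m,n}^{−1} − (b+1)I). Then Y maps A = (1,0,a+2) to B = (0,0,1) and maps D = ((b+1)², b+1, 1) to C = (b−a−1, 1, 0). -/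
theorem stmt10 (a b : ℤ) (ha : 0 ≤ a) (hb : 0 ≤ b) :
    let m : ℚ := (b : ℚ) - a - 1
    let n : ℚ := ((a : ℚ) + 2) * ((b : ℚ) + 1)
    let Amn : Matrix (Fin 3) (Fin 3) ℚ := !![0, 1, 0; 0, 0, 1; 1, -m, -n]
    let Y := Amn⁻¹ * (Amn⁻¹ - ((b : ℚ) + 1) • (1 : Matrix (Fin 3) (Fin 3) ℚ))
    Y.mulVec ![1, 0, (a : ℚ) + 2] = ![0, 0, 1] ∧
    Y.mulVec ![((b : ℚ) + 1) ^ 2, (b : ℚ) + 1, 1] = ![(b : ℚ) - a - 1, 1, 0] := by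
  intro m n Amn Y
  have hinv : Amn⁻¹ = !![m, n, 1; 1, 0, 0; 0, 1, 0] := by
    apply Matrix.inv_eq_right_inv
    show Amn * _ = 1
    ext i j
    fin_cases i <;> fin_cases j <;>
      simp [Amn, Matrix.mul_apply, Fin.sum_univ_three, Matrix.one_apply, Matrix.vecHead, Matrix.vecTail] <;> ring
  have hY : Y = Amn⁻¹ * (Amn⁻¹ - ((b : ℚ) + 1) • (1 : Matrix (Fin 3) (Fin 3) ℚ)) := rfl
  rw [hY, hinv]
  constructor <;> (funext i; fin_cases i) <;>
    simp [Matrix.mulVec, dotProduct, Matrix.mul_apply, Fin.sum_univ_three,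
      Matrix.one_apply, m, n] <;> ring
end
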